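/- Let n ≥ 2 and let ψ : ℝ × ℝⁿ → ℝ be a C^∞ function with ψ(0, y) = 0 for all y. Suppose that for every (t, y) the n×n matrix (∂ₜ∂_{yᵢ}∂_{yⱼ}ψ(t, y))_{1≤i,j≤n} is invertible, and suppose there is a C^∞ function c : ℝ × ℝⁿ → ℝ such that ∂ₜ²∂_{yᵢ}∂_{yⱼ}ψ(t, y) = c(t, y)·∂ₜ∂_{yᵢ}∂_{yⱼ}ψ(t, y) for all 1 ≤ i,j ≤ n and all (t, y) (Bourgain's condition for the translation-invariant phase φ(x, t; y) = ⟨x, y⟩ + ψ(t; y)). Then there exist ε > 0, a C^∞ function α : (−ε, ε) → ℝ with α(0) = 0 and α′(t) ≠ 0 for all |t| < ε, a C^∞ map β : (−ε, ε) → ℝⁿ, and C^∞ functions h, q : ℝⁿ → ℝ and f : (−ε, ε) → ℝ, such that ψ(α(t), y) + ⟨β(t), y⟩ = t·h(y) + q(y) + f(t) for all t ∈ (−ε, ε) and all y ∈ ℝⁿ, and moreover the Hessian matrix (∂²h/∂yᵢ∂yⱼ(y)) is invertible for every y ∈ ℝⁿ. Equivalently, the diffeomorphism κ(x, t) = (x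 + β(t), α(t)) straightens the phase: φ(κ(x, t); y) = ⟨x, y⟩ + t·h(y) + q(y) + f(t). -/

import Mathlib

open scoped ContDiff

/-- Partial derivative `∂ₜ` in the first variable of `f : ℝ × ℝⁿ → ℝ`. -/
noncomputable def dt {n : ℕ} (f : ℝ × (Fin n → ℝ) → ℝ) : ℝ × (Fin n → ℝ) → ℝ :=
  fun p => fderiv ℝ f p ((1 : ℝ), (0 : Fin n → ℝ))

/-- Partial derivative `∂_{yᵢ}` in the `i`-th coordinate of the second variable. -/
noncomputable def dy {n : ℕ} (i : Fin n) (f : ℝ × (Fin n → ℝ) → ℝ) : ℝ × (Fin n → ℝ) → ℝ :=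
  fun p => fderiv ℝ f p ((0 : ℝ), Pi.single i 1)

section Helpers

variable {E : Type*} [NormedAddCommGroup E] [NormedSpace ℝ E]

theorem contDiff_dirD {g : E → ℝ} (hg : ContDiff ℝ (⊤ : ℕ∞) g) (v : E) :
    ContDiff ℝ (⊤ : ℕ∞) (fun p => fderiv ℝ g p v) :=
  (hg.fderiv_right (by simp)).clm_apply contDiff_const

theorem dirD_swap {g : E → ℝ} (hg : ContDiff ℝ (⊤ : ℕ∞) g) (v w : E) (p : E) :
    fderiv ℝ (fun q => fderiv ℝ g q v) p w = fderiv ℝ (fun q => fderiv ℝ g q w) p v := by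
  have hsym : IsSymmSndFDerivAt ℝ g p := hg.contDiffAt.isSymmSndFDerivAt (by simp; exact (WithTop.coe_le_coe.mpr le_top : ((2 : ℕ∞) : WithTop ℕ∞) ≤ ((⊤ : ℕ∞) : WithTop ℕ∞)))
  have hdf : Differentiable ℝ (fderiv ℝ g) := (hg.fderiv_right (m := (⊤ : ℕ∞)) (by simp)).differentiable (by simp)
  have key : ∀ u z : E, fderiv ℝ (fun q => fderiv ℝ g q u) p z
      = fderiv ℝ (fderiv ℝ g) p z u := by
    intro u z
    rw [fderiv_clm_apply (hdf p) (differentiableAt_const u)]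
    simp
  rw [key, key, hsym.eq]

end Helpers

section Slice

variable {n : ℕ} {g : ℝ × (Fin n → ℝ) → ℝ}

theorem fderiv_slice_y (hg : Differentiable ℝ g) (t0 : ℝ) (y0 v : Fin n → ℝ) :
    fderiv ℝ (fun y => g (t0, y)) y0 v = fderiv ℝ g (t0, y0) (0, v) := by
  have hι : HasFDerivAt (fun y : Fin n → ℝ => ((t0, y) : ℝ × (Fin n → ℝ)))
      ((0 : (Fin n → ℝ) →L[ℝ] ℝ).prod (ContinuousLinearMap.id ℝ (Fin n → ℝ))) y0 :=
    (hasFDerivAt_const t0 y0).prodMk (hasFDerivAt_id y0)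
  have := ((hg (t0, y0)).hasFDerivAt.comp y0 hι).fderiv
  rw [show (fun y => g (t0, y)) = g ∘ (fun y : Fin n → ℝ => ((t0, y) : ℝ × (Fin n → ℝ))) from rfl,
    this]
  simp

theorem hasDerivAt_slice_t (hg : Differentiable ℝ g) (t0 : ℝ) (y0 : Fin n → ℝ) :
    HasDerivAt (fun t => g (t, y0)) (dt g (t0, y0)) t0 := by
  have hι : HasDerivAt (fun t : ℝ => ((t, y0) : ℝ × (Fin n → ℝ)))
      (((1 : ℝ), (0 : Fin n → ℝ))) t0 := (hasDerivAt_id t0).prodMk (hasDerivAt_const t0 y0)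
  exact (hg (t0, y0)).hasFDerivAt.comp_hasDerivAt t0 hι

theorem sum_single_smul (v : Fin n → ℝ) :
    ∑ i, v i • (Pi.single i (1 : ℝ) : Fin n → ℝ) = v := by
  funext j
  simp only [Finset.sum_apply, Pi.smul_apply, Pi.single_apply, smul_eq_mul]
  simp [Finset.sum_ite_eq', mul_comm]

theorem clm_pi_eq_sum (L : (Fin n → ℝ) →L[ℝ] ℝ) (v : Fin n → ℝ) :
    L v = ∑ i, v i * L (Pi.single i 1) := by
  conv_lhs => rw [← sum_single_smul v]
  rw [map_sum]
  simp [smul_eq_mul]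

theorem prod_zero_eq_sum (v : Fin n → ℝ) :
    ((0 : ℝ), v) = ∑ i, v i • (((0 : ℝ), Pi.single i (1 : ℝ)) : ℝ × (Fin n → ℝ)) := by
  rw [Prod.ext_iff, Prod.fst_sum, Prod.snd_sum]
  constructor
  · simp
  · simpa using (sum_single_smul v).symm

theorem dy_contDiff (i : Fin n) (hg : ContDiff ℝ (⊤ : ℕ∞) g) : ContDiff ℝ (⊤ : ℕ∞) (dy i g) :=
  contDiff_dirD hg _

theorem dt_contDiff (hg : ContDiff ℝ (⊤ : ℕ∞) g) : ContDiff ℝ (⊤ : ℕ∞) (dt g) :=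
  contDiff_dirD hg _

theorem dy_dt_comm (i : Fin n) (hg : ContDiff ℝ (⊤ : ℕ∞) g) : dy i (dt g) = dt (dy i g) := by
  funext p; exact dirD_swap hg _ _ p

theorem dy_dy_comm (i j : Fin n) (hg : ContDiff ℝ (⊤ : ℕ∞) g) : dy i (dy j g) = dy j (dy i g) := by
  funext p; exact dirD_swap hg _ _ p

end Slice

/-- A translation-invariant phase `φ(x,t;y) = ⟨x,y⟩ + ψ(t;y)` satisfying Hörmander's
non-degeneracy condition and Bourgain's condition can be straightened:
`ψ(α(t), y) + ⟨β(t), y⟩ = t·h(y) + q(y) + f(t)`, with `h` having a non-degenerate Hessian. -/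
theorem straighten_phase_under_Bourgain_condition
    (n : ℕ) (hn : 2 ≤ n)
    (ψ : ℝ × (Fin n → ℝ) → ℝ) (c : ℝ × (Fin n → ℝ) → ℝ)
    (hψ : ContDiff ℝ (⊤ : ℕ∞) ψ) (hc : ContDiff ℝ (⊤ : ℕ∞) c)
    (hψ0 : ∀ y : Fin n → ℝ, ψ (0, y) = 0)
    (hrank : ∀ p : ℝ × (Fin n → ℝ),
      (Matrix.of fun i j : Fin n => dt (dy i (dy j ψ)) p).det ≠ 0)
    (hBourgain : ∀ (p : ℝ × (Fin n → ℝ)) (i j : Fin n),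
      dt (dt (dy i (dy j ψ))) p = c p * dt (dy i (dy j ψ)) p) :
    ∃ ε > (0 : ℝ), ∃ α : ℝ → ℝ, ∃ β : ℝ → (Fin n → ℝ),
      ∃ h q : (Fin n → ℝ) → ℝ, ∃ f : ℝ → ℝ,
      ContDiffOn ℝ (⊤ : ℕ∞) α (Set.Ioo (-ε) ε) ∧
      α 0 = 0 ∧
      (∀ t ∈ Set.Ioo (-ε) ε, deriv α t ≠ 0) ∧
      ContDiffOn ℝ (⊤ : ℕ∞) β (Set.Ioo (-ε) ε) ∧
      ContDiff ℝ (⊤ : ℕ∞) h ∧ ContDiff ℝ (⊤ : ℕ∞) q ∧ ContDiffOn ℝ (⊤ : ℕ∞) f (Set.Ioo (-ε) ε) ∧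
      (∀ t ∈ Set.Ioo (-ε) ε, ∀ y : Fin n → ℝ,
        ψ (α t, y) + ∑ i, β t i * y i = t * h y + q y + f t) ∧
      (∀ y : Fin n → ℝ,
        (Matrix.of fun i j : Fin n =>
          fderiv ℝ (fun z => fderiv ℝ h z (Pi.single j 1)) y (Pi.single i 1)).det ≠ 0) := by
  classical
  -- basic smoothness
  have hHsm : ∀ i j : Fin n, ContDiff ℝ (⊤ : ℕ∞) (dy i (dy j ψ)) :=
    fun i j => dy_contDiff i (dy_contDiff j hψ)
  have hMsm : ∀ i j : Fin n, ContDiff ℝ (⊤ : ℕ∞) (dt (dy i (dy j ψ))) :=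
    fun i j => dt_contDiff (hHsm i j)
  -- Step 1: second derivatives vanish on the slice t = 0
  have hdyψ0 : ∀ (j : Fin n) (y : Fin n → ℝ), dy j ψ (0, y) = 0 := by
    intro j y
    have h0 : (fun y : Fin n → ℝ => ψ (0, y)) = fun _ => (0 : ℝ) := funext hψ0
    have := fderiv_slice_y (hψ.differentiable (by simp)) 0 y (Pi.single j 1)
    rw [h0] at this
    simp only [fderiv_fun_const] at this
    simpa [dy] using this.symm
  have hH0 : ∀ (i j : Fin n) (y : Fin n → ℝ), dy i (dy j ψ) (0, y) = 0 := by
    intro i j y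
    have h0 : (fun y : Fin n → ℝ => dy j ψ (0, y)) = fun _ => (0 : ℝ) := funext (hdyψ0 j)
    have := fderiv_slice_y ((dy_contDiff j hψ).differentiable (by simp)) 0 y (Pi.single i 1)
    rw [h0] at this
    simp only [fderiv_fun_const] at this
    simpa [dy] using this.symm
  -- Step 2: ∂_{y_k} c vanishes
  have hkey : ∀ (p : ℝ × (Fin n → ℝ)) (i j k : Fin n),
      dy k c p * dt (dy i (dy j ψ)) p = dy j c p * dt (dy i (dy k ψ)) p := by
    intro p i j k
    have main : ∀ j' k' : Fin n,
        dy k' (dt (dt (dy i (dy j' ψ)))) p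
          = c p * dy k' (dt (dy i (dy j' ψ))) p + dt (dy i (dy j' ψ)) p * dy k' c p := by
      intro j' k'
      have hfun : dt (dt (dy i (dy j' ψ)))
          = fun q => c q * dt (dy i (dy j' ψ)) q := funext fun q => hBourgain q i j'
      show fderiv ℝ (dt (dt (dy i (dy j' ψ)))) p ((0:ℝ), Pi.single k' 1) = _
      rw [hfun, fderiv_fun_mul (hc.differentiable (by simp) p)
        ((hMsm i j').differentiable (by simp) p)]
      simp only [ContinuousLinearMap.add_apply, ContinuousLinearMap.coe_smul',
        Pi.smul_apply, smul_eq_mul]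
      rfl
    have swapA : ∀ j' k' : Fin n,
        dy k' (dt (dt (dy i (dy j' ψ)))) = dt (dt (dy k' (dy i (dy j' ψ)))) := by
      intro j' k'
      rw [dy_dt_comm k' (dt_contDiff (hHsm i j')), dy_dt_comm k' (hHsm i j')]
    have swapB : ∀ j' k' : Fin n,
        dy k' (dt (dy i (dy j' ψ))) = dt (dy k' (dy i (dy j' ψ))) := fun j' k' =>
      dy_dt_comm k' (hHsm i j')
    have h3 : ∀ j' k' : Fin n, dy k' (dy i (dy j' ψ)) = dy j' (dy i (dy k' ψ)) := by
      intro j' k'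
      calc dy k' (dy i (dy j' ψ)) = dy i (dy k' (dy j' ψ)) :=
            dy_dy_comm k' i (dy_contDiff j' hψ)
        _ = dy i (dy j' (dy k' ψ)) := by rw [dy_dy_comm k' j' hψ]
        _ = dy j' (dy i (dy k' ψ)) := dy_dy_comm i j' (dy_contDiff k' hψ)
    have e1 := main j k
    have e2 := main k j
    rw [swapA j k, swapB j k, h3 j k] at e1
    rw [swapA k j, swapB k j] at e2
    rw [mul_comm (dy k c p), mul_comm (dy j c p)]
    linarith [e1, e2]
  have hdyc : ∀ (p : ℝ × (Fin n → ℝ)) (k : Fin n), dy k c p = 0 := by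
    intro p k
    by_contra hne
    have : Nontrivial (Fin n) := Fin.nontrivial_iff_two_le.mpr hn
    obtain ⟨j, hjk⟩ := exists_ne k
    set μ := dy j c p / dy k c p with hμ
    set A := Matrix.of fun i j' : Fin n => dt (dy i (dy j' ψ)) p with hAdef
    have hcol : ∀ i, A i j = μ * A i k := by
      intro i
      have h1 := hkey p i j k
      have : A i j = dy j c p * A i k / dy k c p := by
        rw [eq_div_iff hne]
        simpa [hAdef, mul_comm] using h1
      rw [this, hμ]; ring
    have hAeq : A = A.updateCol j (μ • fun i => A i k) := by
      ext i j'
      by_cases hj' : j' = j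
      · subst hj'
        rw [Matrix.updateCol_self]
        simpa using hcol i
      · rw [Matrix.updateCol_ne hj']
    have hdet0 : A.det = 0 := by
      rw [hAeq, Matrix.det_updateCol_smul]
      have : (A.updateCol j fun i => A i k).det = 0 := by
        apply Matrix.det_zero_of_column_eq hjk
        intro i
        rw [Matrix.updateCol_self, Matrix.updateCol_ne (Ne.symm hjk)]
      rw [this, mul_zero]
    exact hrank p hdet0
  -- Step 3: c depends only on t
  have hcslice : ∀ (t : ℝ) (y : Fin n → ℝ), c (t, y) = c (t, 0) := by
    intro t y
    have hd : Differentiable ℝ (fun y' : Fin n → ℝ => c (t, y')) :=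
      (hc.comp ((contDiff_const (c := t)).prodMk contDiff_id)).differentiable (by simp)
    refine is_const_of_fderiv_eq_zero hd (fun z => ?_) y 0
    refine ContinuousLinearMap.ext fun v => ?_
    rw [fderiv_slice_y (hc.differentiable (by simp)) t z v, prod_zero_eq_sum v, map_sum]
    simp only [map_smul, smul_eq_mul, ContinuousLinearMap.zero_apply]
    refine Finset.sum_eq_zero fun i _ => ?_
    rw [show fderiv ℝ c (t, z) ((0 : ℝ), Pi.single i 1) = dy i c (t, z) from rfl, hdyc]
    ring
  -- Step 4: the ODE in t
  set C : ℝ → ℝ := fun t => c (t, 0) with hCdef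
  have hCcont : Continuous C := hc.continuous.comp (continuous_id.prodMk continuous_const)
  set I : ℝ → ℝ := fun t => ∫ s in (0:ℝ)..t, C s with hIdef
  have hI : ∀ t, HasDerivAt I (C t) t := fun t =>
    intervalIntegral.integral_hasDerivAt_right (hCcont.intervalIntegrable _ _)
      (hCcont.stronglyMeasurableAtFilter _ _) hCcont.continuousAt
  set Ee : ℝ → ℝ := fun t => Real.exp (I t) with hEdef
  have hEe : ∀ t, HasDerivAt Ee (C t * Ee t) t := by
    intro t; simpa [hEdef, mul_comm] using (hI t).exp
  have hEpos : ∀ t, 0 < Ee t := fun t => Real.exp_pos _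
  have hI0 : I 0 = 0 := by simp [hIdef]
  have hMslice : ∀ (i j : Fin n) (y : Fin n → ℝ) (t : ℝ),
      HasDerivAt (fun t' => dt (dy i (dy j ψ)) (t', y))
        (C t * dt (dy i (dy j ψ)) (t, y)) t := by
    intro i j y t
    have h1 := hasDerivAt_slice_t ((hMsm i j).differentiable (by simp)) t y
    have h2 : dt (dt (dy i (dy j ψ))) (t, y) = C t * dt (dy i (dy j ψ)) (t, y) := by
      rw [hBourgain (t, y) i j, hcslice t y]
    rwa [h2] at h1
  have hMode : ∀ (i j : Fin n) (y : Fin n → ℝ) (t : ℝ),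
      dt (dy i (dy j ψ)) (t, y) = Ee t * dt (dy i (dy j ψ)) (0, y) := by
    intro i j y t
    set m : ℝ → ℝ := fun t' => dt (dy i (dy j ψ)) (t', y) with hmdef
    have hu : ∀ t', HasDerivAt (fun t' => m t' * Real.exp (-(I t'))) 0 t' := by
      intro t'
      have h1 : HasDerivAt (fun t' => Real.exp (-(I t')))
          (-(C t') * Real.exp (-(I t'))) t' := by
        simpa [mul_comm] using ((hI t').neg).exp
      have h2 := (hMslice i j y t').fun_mul h1
      refine h2.congr_deriv ?_
      ring
    have hconst := is_const_of_deriv_eq_zero (fun t' => (hu t').differentiableAt)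
      (fun t' => (hu t').deriv) t 0
    rw [hI0] at hconst
    simp only [neg_zero, Real.exp_zero, mul_one] at hconst
    calc m t = m t * Real.exp (-(I t)) * Real.exp (I t) := by
          rw [mul_assoc, ← Real.exp_add]; simp
      _ = m 0 * Real.exp (I t) := by rw [hconst]
      _ = Ee t * m 0 := by rw [hEdef]; ring
  -- Step 5: integrate once more
  have hEcont : Continuous Ee :=
    Real.continuous_exp.comp (Differentiable.continuous fun t => (hI t).differentiableAt)
  set At : ℝ → ℝ := fun t => ∫ s in (0:ℝ)..t, Ee s with hAtdef
  have hAt' : ∀ t, HasDerivAt At (Ee t) t := fun t =>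
    intervalIntegral.integral_hasDerivAt_right (hEcont.intervalIntegrable _ _)
      (hEcont.stronglyMeasurableAtFilter _ _) hEcont.continuousAt
  have hAt0 : At 0 = 0 := by simp [hAtdef]
  have hHid : ∀ (i j : Fin n) (y : Fin n → ℝ) (t : ℝ),
      dy i (dy j ψ) (t, y) = At t * dt (dy i (dy j ψ)) (0, y) := by
    intro i j y t
    have hu : ∀ t', HasDerivAt
        (fun t' => dy i (dy j ψ) (t', y) - At t' * dt (dy i (dy j ψ)) (0, y)) 0 t' := by
      intro t'
      have h1 := hasDerivAt_slice_t ((hHsm i j).differentiable (by simp)) t' y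
      have h2 := (hAt' t').mul_const (dt (dy i (dy j ψ)) (0, y))
      have h3 := h1.fun_sub h2
      rw [show dt (dy i (dy j ψ)) (t', y) = Ee t' * dt (dy i (dy j ψ)) (0, y) from
        hMode i j y t'] at h3
      simpa using h3
    have hconst := is_const_of_deriv_eq_zero (fun t' => (hu t').differentiableAt)
      (fun t' => (hu t').deriv) t 0
    rw [hH0 i j y, hAt0] at hconst
    simp only [zero_mul, sub_zero, zero_sub] at hconst
    linarith [hconst]
  -- Step 6: an analytic formula for At
  have hex : ∃ i0 j0 : Fin n, dt (dy i0 (dy j0 ψ)) ((0:ℝ), (0 : Fin n → ℝ)) ≠ 0 := by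
    by_contra hall
    push_neg at hall
    apply hrank ((0:ℝ), (0 : Fin n → ℝ))
    have hz : (Matrix.of fun i j : Fin n => dt (dy i (dy j ψ)) ((0:ℝ), (0 : Fin n → ℝ)))
        = 0 := by
      ext i j; exact hall i j
    rw [hz]
    have : Nonempty (Fin n) := ⟨⟨0, by omega⟩⟩
    exact Matrix.det_zero
  obtain ⟨i0, j0, hN0⟩ := hex
  set A : ℝ → ℝ :=
    fun t => dy i0 (dy j0 ψ) (t, 0) / dt (dy i0 (dy j0 ψ)) ((0:ℝ), (0 : Fin n → ℝ))
    with hAdef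
  have hAAt : ∀ t, A t = At t := by
    intro t
    rw [hAdef]
    simp only []
    rw [hHid i0 j0 0 t]
    exact mul_div_cancel_right₀ _ hN0
  have hAfun : A = At := funext hAAt
  have hA0 : A 0 = 0 := by rw [hAfun, hAt0]
  have hAsm : ContDiff ℝ (⊤ : ℕ∞) A :=
    ((hHsm i0 j0).comp (contDiff_id.prodMk contDiff_const)).div_const _
  have hA' : ∀ t, HasDerivAt A (Ee t) t := by rw [hAfun]; exact hAt'
  -- Step 7: the local inverse α
  have hu1 : (Ee 0) ≠ 0 := ne_of_gt (hEpos 0)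
  set f' : ℝ ≃L[ℝ] ℝ :=
    ContinuousLinearEquiv.unitsEquivAut ℝ (Units.mk0 (Ee 0) hu1) with hf'def
  have hfd : HasFDerivAt A ((f' : ℝ →L[ℝ] ℝ)) 0 := by
    have h1 := (hA' 0).hasFDerivAt
    refine h1.congr_fderiv ?_
    ext; simp [hf'def]
  have hAct : ContDiffAt ℝ (⊤ : ℕ∞) A 0 := hAsm.contDiffAt
  have hS : HasStrictFDerivAt A ((f' : ℝ →L[ℝ] ℝ)) 0 := hAct.hasStrictFDerivAt' hfd (by simp)
  set α : ℝ → ℝ := hS.localInverse A f' 0 with hαdef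
  have hα0 : α 0 = 0 := by
    have h1 := hS.localInverse_apply_image
    rwa [hA0] at h1
  have hαC : ContDiffAt ℝ (⊤ : ℕ∞) α 0 := by
    have h1 := hAct.to_localInverse hfd (by simp)
    rwa [hA0] at h1
  have hrinv : ∀ᶠ s in nhds (0:ℝ), A (α s) = s := by
    have h1 := hS.eventually_right_inverse
    rwa [hA0] at h1
  obtain ⟨u, humem, huC⟩ : ∃ u ∈ nhds (0:ℝ), ContDiffOn ℝ (⊤ : ℕ∞) α u := by
    refine ⟨(hS.toOpenPartialHomeomorph A).target, ?_, ?_⟩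
    · have h1 := (hS.toOpenPartialHomeomorph A).open_target.mem_nhds
        hS.image_mem_toOpenPartialHomeomorph_target
      rwa [hA0] at h1
    · intro a ha
      exact ((hS.toOpenPartialHomeomorph A).contDiffAt_symm_deriv (ne_of_gt (hEpos _)) ha
        (hA' _) hAsm.contDiffAt).contDiffWithinAt
  obtain ⟨O, hOa, hOopen, hO0⟩ := eventually_nhds_iff.mp hrinv
  have hUopen : IsOpen (interior u ∩ O) := isOpen_interior.inter hOopen
  have hU0 : (0:ℝ) ∈ interior u ∩ O := ⟨mem_interior_iff_mem_nhds.mpr humem, hO0⟩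
  obtain ⟨ε, hεpos, hball⟩ := Metric.isOpen_iff.mp hUopen 0 hU0
  have hIooU : Set.Ioo (-ε) ε ⊆ interior u ∩ O := by
    intro s hs
    apply hball
    rw [Real.ball_eq_Ioo]
    simpa using hs
  have hαon : ContDiffOn ℝ (⊤ : ℕ∞) α (Set.Ioo (-ε) ε) :=
    huC.mono fun s hs => interior_subset (hIooU hs).1
  have hrid : ∀ t ∈ Set.Ioo (-ε) ε, A (α t) = t := fun t ht => hOa t (hIooU ht).2
  have hαdiff : ∀ t ∈ Set.Ioo (-ε) ε, DifferentiableAt ℝ α t := by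
    intro t ht
    have : u ∈ nhds t :=
      Filter.mem_of_superset (isOpen_interior.mem_nhds (hIooU ht).1) interior_subset
    exact (huC.contDiffAt this).differentiableAt (by simp)
  have hαd0 : ∀ t ∈ Set.Ioo (-ε) ε, deriv α t ≠ 0 := by
    intro t ht hz
    have hcomp : HasDerivAt (fun s => A (α s)) (Ee (α t) * deriv α t) t :=
      (hA' (α t)).comp t (hαdiff t ht).hasDerivAt
    have hone : deriv (fun s => A (α s)) t = 1 := by
      have heq : (fun s => A (α s)) =ᶠ[nhds t] id := by
        filter_upwards [isOpen_Ioo.mem_nhds ht] with s hs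
        exact hrid s hs
      rw [heq.deriv_eq]
      exact deriv_id t
    have h1 : Ee (α t) * deriv α t = 1 := by rw [← hcomp.deriv]; exact hone
    rw [hz, mul_zero] at h1
    exact zero_ne_one h1
  -- Step 8: the function h and its Hessian
  set h : (Fin n → ℝ) → ℝ := fun y => dt ψ ((0:ℝ), y) with hhdef
  have hhsm : ContDiff ℝ (⊤ : ℕ∞) h := (dt_contDiff hψ).comp (contDiff_const.prodMk contDiff_id)
  have hh1 : ∀ (z : Fin n → ℝ) (j : Fin n),
      fderiv ℝ h z (Pi.single j 1) = dy j (dt ψ) ((0:ℝ), z) :=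
    fun z j => fderiv_slice_y ((dt_contDiff hψ).differentiable (by simp)) 0 z _
  have hh2 : ∀ (y : Fin n → ℝ) (i j : Fin n),
      fderiv ℝ (fun z => fderiv ℝ h z (Pi.single j 1)) y (Pi.single i 1)
        = dt (dy i (dy j ψ)) ((0:ℝ), y) := by
    intro y i j
    have e1 : (fun z => fderiv ℝ h z (Pi.single j 1))
        = fun z => dy j (dt ψ) ((0:ℝ), z) := funext fun z => hh1 z j
    rw [e1, fderiv_slice_y ((dy_contDiff j (dt_contDiff hψ)).differentiable (by simp)) 0 y _]
    show dy i (dy j (dt ψ)) ((0:ℝ), y) = dt (dy i (dy j ψ)) ((0:ℝ), y)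
    rw [dy_dt_comm j hψ, dy_dt_comm i (dy_contDiff j hψ)]
  have hHess : ∀ y : Fin n → ℝ,
      (Matrix.of fun i j : Fin n =>
        fderiv ℝ (fun z => fderiv ℝ h z (Pi.single j 1)) y (Pi.single i 1)).det ≠ 0 := by
    intro y
    have e1 : (Matrix.of fun i j : Fin n =>
        fderiv ℝ (fun z => fderiv ℝ h z (Pi.single j 1)) y (Pi.single i 1))
        = Matrix.of fun i j : Fin n => dt (dy i (dy j ψ)) ((0:ℝ), y) := by
      ext i j; exact hh2 y i j
    rw [e1]
    exact hrank _
  -- Step 9: the straightening identity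
  set β : ℝ → Fin n → ℝ :=
    fun t j => t * dy j (dt ψ) ((0:ℝ), (0 : Fin n → ℝ)) - dy j ψ (α t, 0) with hβdef
  set fF : ℝ → ℝ := fun t => ψ (α t, (0 : Fin n → ℝ)) - t * h 0 with hfFdef
  have hβsm : ContDiffOn ℝ (⊤ : ℕ∞) β (Set.Ioo (-ε) ε) := by
    rw [contDiffOn_pi]
    intro j
    apply ContDiffOn.sub
    · exact contDiffOn_id.mul contDiffOn_const
    · exact (dy_contDiff j hψ).comp_contDiffOn (hαon.prodMk contDiffOn_const)
  have hfFsm : ContDiffOn ℝ (⊤ : ℕ∞) fF (Set.Ioo (-ε) ε) :=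
    (hψ.comp_contDiffOn (hαon.prodMk contDiffOn_const)).sub
      (contDiffOn_id.mul contDiffOn_const)
  have hmain : ∀ t ∈ Set.Ioo (-ε) ε, ∀ y : Fin n → ℝ,
      ψ (α t, y) + ∑ i, β t i * y i = t * h y + (0:ℝ) + fF t := by
    intro t ht y
    set s := α t with hsdef
    have hAs : A s = t := hrid t ht
    set W : Fin n → (Fin n → ℝ) → ℝ :=
      fun j z => dy j ψ (s, z) - t * dy j (dt ψ) ((0:ℝ), z) with hWdef
    have hWdiff : ∀ j, Differentiable ℝ (W j) := by
      intro j
      apply Differentiable.sub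
      · exact ((dy_contDiff j hψ).comp
          (contDiff_const.prodMk contDiff_id)).differentiable (by simp)
      · exact (((dy_contDiff j (dt_contDiff hψ)).comp
          (contDiff_const.prodMk contDiff_id)).differentiable (by simp)).const_mul t
    have hWpart : ∀ (j i : Fin n) (z : Fin n → ℝ),
        fderiv ℝ (W j) z (Pi.single i 1) = 0 := by
      intro j i z
      have d1 : Differentiable ℝ (fun z' : Fin n → ℝ => dy j ψ (s, z')) :=
        ((dy_contDiff j hψ).comp (contDiff_const.prodMk contDiff_id)).differentiable (by simp)
      have d2 : Differentiable ℝ (fun z' : Fin n → ℝ => dy j (dt ψ) ((0:ℝ), z')) :=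
        ((dy_contDiff j (dt_contDiff hψ)).comp
          (contDiff_const.prodMk contDiff_id)).differentiable (by simp)
      have e0 : fderiv ℝ (W j) z (Pi.single i 1)
          = fderiv ℝ (fun z' : Fin n → ℝ => dy j ψ (s, z')) z (Pi.single i 1)
            - t * fderiv ℝ (fun z' : Fin n → ℝ => dy j (dt ψ) ((0:ℝ), z')) z
              (Pi.single i 1) := by
        have hWj : W j = fun z' => dy j ψ (s, z') - t * dy j (dt ψ) ((0:ℝ), z') := rfl
        rw [hWj, fderiv_fun_sub (d1 z) ((d2 z).const_mul t)]
        simp only [ContinuousLinearMap.coe_sub', Pi.sub_apply]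
        congr 1
        rw [fderiv_const_mul (d2 z) t]
        simp
      have e1 : fderiv ℝ (fun z' : Fin n → ℝ => dy j ψ (s, z')) z (Pi.single i 1)
          = dy i (dy j ψ) (s, z) :=
        fderiv_slice_y ((dy_contDiff j hψ).differentiable (by simp)) s z _
      have e2 : fderiv ℝ (fun z' : Fin n → ℝ => dy j (dt ψ) ((0:ℝ), z')) z
          (Pi.single i 1) = dt (dy i (dy j ψ)) ((0:ℝ), z) := by
        rw [fderiv_slice_y ((dy_contDiff j (dt_contDiff hψ)).differentiable (by simp)) 0 z _]
        show dy i (dy j (dt ψ)) ((0:ℝ), z) = dt (dy i (dy j ψ)) ((0:ℝ), z)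
        rw [dy_dt_comm j hψ, dy_dt_comm i (dy_contDiff j hψ)]
      rw [e0, e1, e2, hHid i j z s, ← hAAt s, hAs]
      ring
    have hWconst : ∀ (j : Fin n) (z : Fin n → ℝ), W j z = W j 0 := by
      intro j z
      apply is_const_of_fderiv_eq_zero (hWdiff j) _ z 0
      intro z'
      refine ContinuousLinearMap.ext fun v => ?_
      rw [clm_pi_eq_sum]
      simp only [ContinuousLinearMap.zero_apply]
      exact Finset.sum_eq_zero fun i _ => by rw [hWpart j i z', mul_zero]
    -- the linear part as a continuous linear map
    set L : (Fin n → ℝ) →L[ℝ] ℝ :=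
      ∑ j, (W j 0) • (ContinuousLinearMap.proj j : (Fin n → ℝ) →L[ℝ] ℝ) with hLdef
    have hLapp : ∀ v : Fin n → ℝ, L v = ∑ j, W j 0 * v j := by
      intro v
      rw [hLdef]
      simp [ContinuousLinearMap.sum_apply, smul_eq_mul]
    have hLsingle : ∀ j : Fin n, L (Pi.single j 1) = W j 0 := by
      intro j
      rw [hLapp]
      simp [Pi.single_apply]
    set G : (Fin n → ℝ) → ℝ := fun y' => ψ (s, y') - t * h y' - L y' with hGdef
    have hGdiff : Differentiable ℝ G := by
      apply Differentiable.sub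
      · apply Differentiable.sub
        · exact ((hψ.comp (contDiff_const.prodMk contDiff_id)).differentiable (by simp))
        · exact ((hhsm.differentiable (by simp)).const_mul t)
      · exact L.differentiable
    have hGpart : ∀ (j : Fin n) (z : Fin n → ℝ), fderiv ℝ G z (Pi.single j 1) = 0 := by
      intro j z
      have d1 : Differentiable ℝ (fun y' : Fin n → ℝ => ψ (s, y')) :=
        (hψ.comp (contDiff_const.prodMk contDiff_id)).differentiable (by simp)
      have d2 : Differentiable ℝ h := hhsm.differentiable (by simp)
      have e0 : fderiv ℝ G z (Pi.single j 1)
          = fderiv ℝ (fun y' : Fin n → ℝ => ψ (s, y')) z (Pi.single j 1)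
            - t * fderiv ℝ h z (Pi.single j 1) - L (Pi.single j 1) := by
        have hGj : G = fun y' => (ψ (s, y') - t * h y') - L y' := rfl
        rw [hGj, fderiv_fun_sub ((d1 z).fun_sub ((d2 z).const_mul t)) L.differentiableAt,
          fderiv_fun_sub (d1 z) ((d2 z).const_mul t)]
        simp only [ContinuousLinearMap.coe_sub', Pi.sub_apply, L.fderiv]
        congr 2
        rw [fderiv_const_mul (d2 z) t]
        simp
      rw [e0, hLsingle, fderiv_slice_y (hψ.differentiable (by simp)) s z _]
      have : fderiv ℝ ψ (s, z) ((0:ℝ), Pi.single j 1) = dy j ψ (s, z) := rfl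
      rw [this, hh1]
      have hWz := hWconst j z
      have hW0 : W j 0 = dy j ψ (s, 0) - t * dy j (dt ψ) ((0:ℝ), 0) := rfl
      have hWz' : W j z = dy j ψ (s, z) - t * dy j (dt ψ) ((0:ℝ), z) := rfl
      rw [hW0] at hWz ⊢
      rw [hWz'] at hWz
      linarith [hWz]
    have hGconst : ∀ y' : Fin n → ℝ, G y' = G 0 := by
      intro y'
      apply is_const_of_fderiv_eq_zero hGdiff _ y' 0
      intro z
      refine ContinuousLinearMap.ext fun v => ?_
      rw [clm_pi_eq_sum]
      simp only [ContinuousLinearMap.zero_apply]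
      exact Finset.sum_eq_zero fun j _ => by rw [hGpart j z, mul_zero]
    have hG0 : G 0 = ψ (s, 0) - t * h 0 := by
      rw [hGdef]
      simp only []
      rw [hLapp]
      simp
    have hGy := hGconst y
    rw [hG0, hGdef] at hGy
    simp only at hGy
    rw [hLapp] at hGy
    have hβW : ∀ i : Fin n, β t i = -(W i 0) := by
      intro i
      rw [hβdef, hWdef]
      simp only []
      ring
    have hsum : ∑ i, β t i * y i = -∑ i, W i 0 * y i := by
      rw [← Finset.sum_neg_distrib]
      exact Finset.sum_congr rfl fun i _ => by rw [hβW i]; ring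
    rw [hsum]
    rw [hfFdef]
    simp only []
    rw [hsdef] at hGy ⊢
    linarith [hGy]
  exact ⟨ε, hεpos, α, β, h, (fun _ => 0), fF, hαon, hα0, hαd0, hβsm, hhsm,
    contDiff_const, hfFsm, by simpa using hmain, hHess⟩
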